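/- For 0 < α ≤ 1/2, the length N of a sequence can be recovered from its FOFE code: if FOFE(S) = FOFE(S') for sequences S of length N and S' of length M, then N = M. -/

import Mathlib

/-! The total mass `∑ᵥ fofe α S v` of a code is the geometric sum `∑_{n < N} αⁿ`, because each
step scales the mass by `α` and adds the unit mass of a one-hot vector. For `α > 0` these sums are
strictly increasing in `N`, so equal codes have equal lengths. -/

noncomputable def oneHot {V : Type*} [DecidableEq V] (w v : V) : ℝ := if v = w then 1 else 0

noncomputable def fofe {V : Type*} [DecidableEq V] (α : ℝ) (S : List V) : V → ℝ :=
  S.foldl (fun z w v => α * z v + oneHot w v) (fun _ => 0)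

open Finset

theorem geom_sum_strictMono {R : Type*} [Semiring R] [PartialOrder R] [IsStrictOrderedRing R]
    {x : R} (hx : 0 < x) : StrictMono fun n => ∑ i ∈ range n, x ^ i :=
  strictMono_nat_of_lt_succ fun n => by
    simpa only [sum_range_succ] using lt_add_of_pos_right _ (pow_pos hx n)

section
variable {V : Type*} [DecidableEq V]

theorem sum_oneHot {s : Finset V} {w : V} (hw : w ∈ s) : ∑ v ∈ s, oneHot w v = 1 := by
  simp [oneHot, hw]

@[simp]
theorem fofe_nil (α : ℝ) : fofe α ([] : List V) = 0 :=
  rfl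

theorem fofe_append_singleton (α : ℝ) (S : List V) (w : V) :
    fofe α (S ++ [w]) = fun v => α * fofe α S v + oneHot w v := by
  simp [fofe, List.foldl_append]

theorem sum_fofe (α : ℝ) (S : List V) {s : Finset V} (hs : S.toFinset ⊆ s) :
    ∑ v ∈ s, fofe α S v = ∑ n ∈ range S.length, α ^ n := by
  induction S using List.reverseRecOn with
  | nil => simp
  | append_singleton S w ih =>
    have hSs : S.toFinset ⊆ s := subset_trans (by simp) hs
    have hws : w ∈ s := hs (by simp)
    rw [fofe_append_singleton, sum_add_distrib, ← mul_sum, ih hSs, sum_oneHot hws,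
      List.length_append, List.length_singleton, geom_sum_succ]

end

theorem fofe_length_recoverable_general {V : Type*} [DecidableEq V] {α : ℝ}
    (hα0 : 0 < α) (S S' : List V)
    (h : fofe α S = fofe α S') : S.length = S'.length := by
  have hmass := sum_fofe α S (s := S.toFinset ∪ S'.toFinset) subset_union_left
  rw [h, sum_fofe α S' subset_union_right] at hmass
  exact (geom_sum_strictMono hα0).injective hmass.symm

theorem fofe_length_recoverable {V : Type*} [Countable V] [DecidableEq V] {α : ℝ}
    (hα0 : 0 < α) (hα : α ≤ 1/2) (S S' : List V)
    (h : fofe α S = fofe α S') : S.length = S'.length :=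
  fofe_length_recoverable_general hα0 S S' h
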